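/- Let θ be irrational and let e_n = U^{k_n} V^{l_n} be words in the generators U, V of the irrational rotation C*-algebra A_θ (satisfying UV = e^{2πiθ}VU), where (k_n, l_n) are chosen as in the inductive construction so that ‖e_n e_j + e_j e_n‖ ≤ 2^{1-n} and ‖e_n e_j* + e_j* e_n‖ ≤ 2^{1-n} for j < n. Then for every N and every n large enough (depending on N), the linear span E_N^n of e_{n+1}, …, e_{n+N} satisfies: for all x ∈ E_N^n, ‖x‖_{L²(τ)} ≤ ‖x‖_{A_θ} ≤ 2‖x‖_{L²(τ)}, where τ is the canonical trace on A_θ. -/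

import Mathlib

open Complex

/-! The words `e_m` are unitaries, and distinct ones are `τ`-orthogonal: by traciality
`τ (e_p⋆ e_q)` is the trace of a single word `U^a V^b`, nontrivial because `‖e_q e_p + e_p e_q‖ < 2`
rules out `e_p = e_q`. Hence `τ (x⋆x) = ∑ |a_j|²`, which is at most `‖x‖²` as for any state.
Conversely `‖x‖² = ‖x⋆x‖ ≤ ‖x x⋆ + x⋆x‖`; expanding the anticommutator, the diagonal terms give
`2 ∑ |a_j|²` and the off-diagonal ones at most `2^{-n} (∑ |a_j|)² ≤ N 2^{-n} ∑ |a_j|²`, which is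
negligible once `n ≥ N`. -/

section Words

variable {A : Type*} [Monoid A] [StarMul A]

lemma trace_star_word_mul_word_eq_zero (τ : A → ℂ) (htrace : ∀ a b : A, τ (a * b) = τ (b * a))
    (U V : unitary A)
    (hcanonical : ∀ a b : ℤ, ¬(a = 0 ∧ b = 0) → τ ((U ^ a * V ^ b : unitary A) : A) = 0)
    {k₁ l₁ k₂ l₂ : ℤ} (hne : ¬(k₁ = k₂ ∧ l₁ = l₂)) :
    τ (star ((U ^ k₁ * V ^ l₁ : unitary A) : A) * ((U ^ k₂ * V ^ l₂ : unitary A) : A)) = 0 := by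
  have hsplit : star ((U ^ k₁ * V ^ l₁ : unitary A) : A) * ((U ^ k₂ * V ^ l₂ : unitary A) : A)
      = ((V ^ (-l₁) : unitary A) : A) * ((U ^ (k₂ - k₁) * V ^ l₂ : unitary A) : A) := by
    rw [← Unitary.coe_star, Unitary.star_eq_inv]
    show (((U ^ k₁ * V ^ l₁)⁻¹ * (U ^ k₂ * V ^ l₂) : unitary A) : A) = _
    rw [show (U ^ k₁ * V ^ l₁)⁻¹ * (U ^ k₂ * V ^ l₂) = V ^ (-l₁) * (U ^ (k₂ - k₁) * V ^ l₂) by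
      group]
    rfl
  have hcyclic : U ^ (k₂ - k₁) * V ^ l₂ * V ^ (-l₁) = U ^ (k₂ - k₁) * V ^ (l₂ - l₁) := by group
  rw [hsplit, htrace]
  show τ ((U ^ (k₂ - k₁) * V ^ l₂ * V ^ (-l₁) : unitary A) : A) = 0
  rw [hcyclic]
  exact hcanonical _ _ (by omega)

lemma trace_star_natWord_mul_natWord_eq_zero (τ : A → ℂ)
    (htrace : ∀ a b : A, τ (a * b) = τ (b * a)) (U V : unitary A)
    (hcanonical : ∀ a b : ℤ, ¬(a = 0 ∧ b = 0) → τ ((U ^ a * V ^ b : unitary A) : A) = 0)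
    {k₁ l₁ k₂ l₂ : ℕ}
    (hne : ((U ^ k₁ : unitary A) : A) * ((V ^ l₁ : unitary A) : A)
      ≠ ((U ^ k₂ : unitary A) : A) * ((V ^ l₂ : unitary A) : A)) :
    τ (star (((U ^ k₁ : unitary A) : A) * ((V ^ l₁ : unitary A) : A))
      * (((U ^ k₂ : unitary A) : A) * ((V ^ l₂ : unitary A) : A))) = 0 := by
  simp only [← zpow_natCast] at hne ⊢
  refine trace_star_word_mul_word_eq_zero τ htrace U V hcanonical fun ⟨hk, hl⟩ => hne ?_
  rw [Nat.cast_injective hk, Nat.cast_injective hl]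

end Words

section Orthonormal

open Finset

variable {A : Type*} [Ring A] [StarRing A] [Algebra ℂ A] [StarModule ℂ A]

lemma trace_star_sum_smul_mul_sum_smul {ι : Type*} [Fintype ι] (τ : A →ₗ[ℂ] ℂ) (f : ι → A)
    (hnorm : ∀ i, τ (star (f i) * f i) = 1)
    (horth : ∀ i j, i ≠ j → τ (star (f i) * f j) = 0) (a : ι → ℂ) :
    τ (star (∑ i, a i • f i) * ∑ i, a i • f i) = ((∑ i, ‖a i‖ ^ 2 : ℝ) : ℂ) := by
  classical
  have hrow : ∀ i j, τ ((starRingEnd ℂ (a i) • star (f i)) * (a j • f j))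
      = if i = j then ((‖a i‖ ^ 2 : ℝ) : ℂ) else 0 := by
    intro i j
    rw [smul_mul_smul_comm, map_smul, smul_eq_mul]
    split_ifs with hij
    · rw [← hij, hnorm, mul_one, ← Complex.normSq_eq_conj_mul_self, Complex.sq_norm]
    · rw [horth i j hij, mul_zero]
  simp only [star_sum, star_smul, ← starRingEnd_apply, sum_mul_sum, map_sum, hrow,
    sum_ite_eq, mem_univ, if_true]
  push_cast
  rfl

lemma sum_smul_mul_star_add_star_mul {ι : Type*} [Fintype ι] (f : ι → A) (a : ι → ℂ) :
    (∑ i, a i • f i) * star (∑ i, a i • f i) + star (∑ i, a i • f i) * ∑ i, a i • f i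
      = ∑ i, ∑ j, (a i * starRingEnd ℂ (a j)) • (f i * star (f j) + star (f j) * f i) := by
  have hstar : star (∑ i, a i • f i) = ∑ i, starRingEnd ℂ (a i) • star (f i) := by
    simp only [star_sum, star_smul, starRingEnd_apply]
  have hleft : (∑ i, a i • f i) * ∑ j, starRingEnd ℂ (a j) • star (f j)
      = ∑ i, ∑ j, (a i * starRingEnd ℂ (a j)) • (f i * star (f j)) := by
    simp only [sum_mul_sum, smul_mul_smul_comm]
  have hright : (∑ j, starRingEnd ℂ (a j) • star (f j)) * ∑ i, a i • f i
      = ∑ i, ∑ j, (a i * starRingEnd ℂ (a j)) • (star (f j) * f i) := by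
    rw [sum_mul_sum, sum_comm]
    simp only [smul_mul_smul_comm, mul_comm (starRingEnd ℂ _)]
  rw [hstar, hleft, hright, ← sum_add_distrib]
  simp only [← sum_add_distrib, smul_add]

end Orthonormal

section CStarAlgebra

open Finset

variable {A : Type*} [CStarAlgebra A]

lemma ne_of_norm_mul_add_mul_lt_two [Nontrivial A] {u v : A} (hu : u ∈ unitary A)
    (h : ‖u * v + v * u‖ < 2) : u ≠ v := by
  rintro rfl
  rw [← two_smul ℂ (u * u), norm_smul, CStarRing.norm_of_mem_unitary (mul_mem hu hu),
    Complex.norm_two, mul_one] at h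
  exact lt_irrefl _ h

lemma norm_mul_star_add_star_mul_comm (x y : A) :
    ‖x * star y + star y * x‖ = ‖y * star x + star x * y‖ := by
  rw [← norm_star, star_add, star_mul, star_mul, star_star, add_comm]

lemma ne_of_norm_anticomm_le_two_zpow [Nontrivial A] {e : ℕ → A} (he : ∀ m, e m ∈ unitary A)
    (hanti : ∀ n j, j < n → ‖e n * e j + e j * e n‖ ≤ (2 : ℝ) ^ (1 - (n : ℤ))) {p q : ℕ}
    (hpq : p ≠ q) : e p ≠ e q := by
  have hlt : ∀ p q, q < p → e p ≠ e q := fun p q hqp =>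
    ne_of_norm_mul_add_mul_lt_two (he p) <| (hanti p q hqp).trans_lt <|
      (zpow_le_one_of_nonpos₀ one_le_two (by omega)).trans_lt one_lt_two
  exact hpq.lt_or_gt.elim (fun h => (hlt q p h).symm) (hlt p q)

lemma norm_anticomm_le_two_zpow_neg {e : ℕ → A}
    (hanti : ∀ n j, j < n → ‖e n * star (e j) + star (e j) * e n‖ ≤ (2 : ℝ) ^ (1 - (n : ℤ)))
    {n p q : ℕ} (hpq : p ≠ q) (hp : n < p) (hq : n < q) :
    ‖e p * star (e q) + star (e q) * e p‖ ≤ (2 : ℝ) ^ (-(n : ℤ)) := by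
  rcases hpq.lt_or_gt with hlt | hlt
  · rw [norm_mul_star_add_star_mul_comm]
    exact (hanti q p hlt).trans (zpow_le_zpow_right₀ one_le_two (by omega))
  · exact (hanti p q hlt).trans (zpow_le_zpow_right₀ one_le_two (by omega))

lemma re_apply_star_mul_self_le_norm_sq (τ : A →ₗ[ℂ] ℂ) (hτ1 : τ 1 = 1)
    (hpos : ∀ a : A, 0 ≤ (τ (star a * a)).re) (x : A) : (τ (star x * x)).re ≤ ‖x‖ ^ 2 := by
  let _ := CStarAlgebra.spectralOrder A
  let _ := CStarAlgebra.spectralOrderedRing A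
  have hmono : ∀ y : A, 0 ≤ y → 0 ≤ (τ y).re := by
    intro y hy
    rw [StarOrderedRing.nonneg_iff] at hy
    induction hy using AddSubmonoid.closure_induction with
    | mem z hz => obtain ⟨s, rfl⟩ := hz; exact hpos s
    | zero => simp
    | add z w _ _ hz hw => rw [map_add, Complex.add_re]; exact add_nonneg hz hw
  have hτalg : τ (algebraMap ℝ A (‖x‖ ^ 2)) = ((‖x‖ ^ 2 : ℝ) : ℂ) := by
    rw [IsScalarTower.algebraMap_apply ℝ ℂ A, Algebra.algebraMap_eq_smul_one, map_smul, hτ1,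
      smul_eq_mul, mul_one, Complex.coe_algebraMap]
  have := hmono _ (sub_nonneg.mpr (CStarAlgebra.star_mul_le_algebraMap_norm_sq (a := x)))
  rwa [map_sub, Complex.sub_re, sub_nonneg, hτalg, Complex.ofReal_re] at this

lemma sq_norm_le_norm_mul_star_add_star_mul (x : A) : ‖x‖ ^ 2 ≤ ‖x * star x + star x * x‖ := by
  let _ := CStarAlgebra.spectralOrder A
  let _ := CStarAlgebra.spectralOrderedRing A
  rw [sq, ← CStarRing.norm_star_mul_self]
  exact CStarAlgebra.norm_le_norm_of_nonneg_of_le (star_mul_self_nonneg x)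
    (le_add_of_nonneg_left (mul_star_self_nonneg x))

lemma sq_norm_sum_smul_le [Nontrivial A] {ι : Type*} [Fintype ι] (f : ι → A)
    (hf : ∀ i, f i ∈ unitary A) {ε : ℝ} (hε : 0 ≤ ε)
    (hanti : ∀ i j, i ≠ j → ‖f i * star (f j) + star (f j) * f i‖ ≤ ε) (a : ι → ℂ) :
    ‖∑ i, a i • f i‖ ^ 2 ≤ (2 + Fintype.card ι * ε) * ∑ i, ‖a i‖ ^ 2 := by
  classical
  have hterm : ∀ i j, ‖(a i * starRingEnd ℂ (a j)) • (f i * star (f j) + star (f j) * f i)‖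
      ≤ (if i = j then 2 * ‖a i‖ ^ 2 else 0) + ε * (‖a i‖ * ‖a j‖) := by
    intro i j
    rw [norm_smul, norm_mul, Complex.norm_conj]
    split_ifs with hij
    · subst hij
      have hdiag : ‖f i * star (f i) + star (f i) * f i‖ ≤ 2 := by
        rw [Unitary.mul_star_self_of_mem (hf i), Unitary.star_mul_self_of_mem (hf i)]
        exact (norm_add_le _ _).trans_eq (by rw [norm_one]; norm_num)
      nlinarith [mul_le_mul_of_nonneg_left hdiag (by positivity : 0 ≤ ‖a i‖ * ‖a i‖),
        mul_nonneg hε (mul_self_nonneg ‖a i‖)]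
    · nlinarith [mul_le_mul_of_nonneg_left (hanti i j hij) (by positivity : 0 ≤ ‖a i‖ * ‖a j‖)]
  have hcs := sq_sum_le_card_mul_sum_sq (s := univ) (f := fun i => ‖a i‖)
  rw [card_univ] at hcs
  calc ‖∑ i, a i • f i‖ ^ 2
      ≤ ‖∑ i, ∑ j, (a i * starRingEnd ℂ (a j)) • (f i * star (f j) + star (f j) * f i)‖ := by
        rw [← sum_smul_mul_star_add_star_mul]
        exact sq_norm_le_norm_mul_star_add_star_mul _
    _ ≤ ∑ i, ∑ j, ((if i = j then 2 * ‖a i‖ ^ 2 else 0) + ε * (‖a i‖ * ‖a j‖)) :=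
        (norm_sum_le _ _).trans <| sum_le_sum fun i _ =>
          (norm_sum_le _ _).trans <| sum_le_sum fun j _ => hterm i j
    _ = 2 * ∑ i, ‖a i‖ ^ 2 + ε * (∑ i, ‖a i‖) ^ 2 := by
        simp only [sum_add_distrib, sum_ite_eq, mem_univ, if_true, ← mul_sum, sq, sum_mul_sum]
    _ ≤ (2 + Fintype.card ι * ε) * ∑ i, ‖a i‖ ^ 2 := by nlinarith

end CStarAlgebra

lemma natCast_mul_two_zpow_neg_le_one {N n : ℕ} (hN : N ≤ n) :
    (N : ℝ) * (2 : ℝ) ^ (-(n : ℤ)) ≤ 1 := by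
  rw [zpow_neg, zpow_natCast, ← div_eq_mul_inv, div_le_one (by positivity)]
  exact_mod_cast hN.trans Nat.lt_two_pow_self.le

theorem span_words_two_isomorphic_to_L2
    {A : Type*} [NormedRing A] [StarRing A] [CStarRing A] [NormedAlgebra ℂ A]
    [StarModule ℂ A] [CompleteSpace A]
    (U V : unitary A)
    (τ : A →ₗ[ℂ] ℂ) (hτ1 : τ 1 = 1)
    (htrace : ∀ a b : A, τ (a * b) = τ (b * a))
    (hpos : ∀ a : A, 0 ≤ (τ (star a * a)).re ∧ (τ (star a * a)).im = 0)
    (hcanonical : ∀ a b : ℤ, ¬(a = 0 ∧ b = 0) → τ (((U ^ a * V ^ b : unitary A) : A)) = 0)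
    (k l : ℕ → ℕ)
    (e : ℕ → A) (he : ∀ m, e m = ((U ^ k m : unitary A) : A) * ((V ^ l m : unitary A) : A))
    (hanti : ∀ n j, j < n →
      ‖e n * e j + e j * e n‖ ≤ (2 : ℝ) ^ (1 - (n : ℤ)) ∧
      ‖e n * star (e j) + star (e j) * e n‖ ≤ (2 : ℝ) ^ (1 - (n : ℤ))) :
    ∀ N : ℕ, ∃ n₀ : ℕ, ∀ n ≥ n₀, ∀ a : Fin N → ℂ,
      Real.sqrt ((τ (star (∑ j, a j • e (n + 1 + j)) * (∑ j, a j • e (n + 1 + j)))).re)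
        ≤ ‖∑ j, a j • e (n + 1 + j)‖ ∧
      ‖∑ j, a j • e (n + 1 + j)‖ ≤
        2 * Real.sqrt ((τ (star (∑ j, a j • e (n + 1 + j)) *
          (∑ j, a j • e (n + 1 + j)))).re) := by
  let _ : CStarAlgebra A := {}
  have : Nontrivial A := ⟨⟨1, 0, fun h => by simp [h] at hτ1⟩⟩
  have hunit : ∀ m, e m ∈ unitary A := fun m =>
    he m ▸ mul_mem (SetLike.coe_mem _) (SetLike.coe_mem _)
  have horth : ∀ p q, p ≠ q → τ (star (e p) * e q) = 0 := fun p q hpq => by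
    have hne := ne_of_norm_anticomm_le_two_zpow hunit (fun p q h => (hanti p q h).1) hpq
    rw [he, he] at hne ⊢
    exact trace_star_natWord_mul_natWord_eq_zero τ htrace U V hcanonical hne
  intro N
  refine ⟨N, fun n hn a => ?_⟩
  have hτx := trace_star_sum_smul_mul_sum_smul τ (fun j : Fin N => e (n + 1 + j))
    (fun _ => by rw [Unitary.star_mul_self_of_mem (hunit _), hτ1])
    (fun i j hij => horth _ _ (by simpa using Fin.val_injective.ne hij)) a
  have hlow := re_apply_star_mul_self_le_norm_sq τ hτ1 (fun x => (hpos x).1)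
    (∑ j, a j • e (n + 1 + j))
  have hup := sq_norm_sum_smul_le (fun j : Fin N => e (n + 1 + j)) (fun _ => hunit _)
    (by positivity) (fun i j hij => norm_anticomm_le_two_zpow_neg (n := n)
      (fun p q h => (hanti p q h).2) (by simpa using Fin.val_injective.ne hij) (by omega)
      (by omega)) a
  rw [Fintype.card_fin] at hup
  rw [hτx, Complex.ofReal_re] at hlow ⊢
  refine ⟨(Real.sqrt_le_left (norm_nonneg _)).mpr hlow,
    (pow_le_pow_iff_left₀ (norm_nonneg _) (by positivity) two_ne_zero).mp ?_⟩
  rw [mul_pow, Real.sq_sqrt (by positivity)]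
  nlinarith [mul_le_mul_of_nonneg_right (natCast_mul_two_zpow_neg_le_one hn)
    (by positivity : 0 ≤ ∑ i, ‖a i‖ ^ 2)]
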